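/- The Gegenbauer polynomial admits the expansion around x = −1: G_n(x,z) = Σ_{k=0}^n (2^n·C(n,k)/n!) · (−1)^{n+k} · (Π_{i=2k}^{n+k−1}(z + i/2)) · (Π_{i=0}^{k−1}(z+i)) · (x+1)^k, as an identity of bivariate polynomials in x and z. -/

import Mathlib

/-!
Substituting `2x = 2(x + 1) - 2` and expanding binomially shows that the coefficient of
`(x + 1)^j` in `G_n(x, z)` is `(-1)^(n-j) 2^j (z)_j / j! · G_{n-j}(1, z + j)`, where
`(z)_j = z(z+1)⋯(z+j-1)`. The value at `1` is `G_m(1, w) = (2w)_m / m!`: this is the duplication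
formula `(2w)_m = Σ_k (-1)^k 2^(m-2k) m! / (k! (m-2k)!) (w)_(m-k)`, proved by induction on `m`
from `(2w + m) (w)_(m-k) = 2 (w)_(m-k+1) - (m - 2k) (w)_(m-k)`. Finally
`(2(z + j))_m = 2^m ∏_{i=2j}^{2j+m-1} (z + i/2)`.
-/

open Finset

/-- The Gegenbauer polynomial `G_n(x, z)` as a real-valued function of both variables. -/
noncomputable def gegenbauerFun (n : ℕ) (x z : ℝ) : ℝ :=
  ∑ k ∈ Finset.range (n / 2 + 1),
    (-1 : ℝ) ^ k * (∏ i ∈ Finset.range (n - k), (z + (i : ℝ))) /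
      ((k.factorial : ℝ) * ((n - 2 * k).factorial : ℝ)) * (2 * x) ^ (n - 2 * k)

open Nat

section

variable (K : Type*) [Field K]

noncomputable def duplicationCoeff (m k : ℕ) : K :=
  if 2 * k ≤ m then (-1) ^ k * 2 ^ (m - 2 * k) * m ! / (k ! * (m - 2 * k)!) else 0

variable {K}

lemma duplicationCoeff_of_lt {m k : ℕ} (h : m < 2 * k) : duplicationCoeff K m k = 0 :=
  if_neg (by omega)

lemma duplicationCoeff_two_mul_add (k r : ℕ) :
    duplicationCoeff K (2 * k + r) k = (-1) ^ k * 2 ^ r * (2 * k + r)! / (k ! * r !) := by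
  simp [duplicationCoeff]

variable [CharZero K]

lemma duplicationCoeff_zero_right (m : ℕ) : duplicationCoeff K m 0 = 2 ^ m := by
  have hm : (m ! : K) ≠ 0 := cast_ne_zero.2 (factorial_ne_zero m)
  simpa [hm] using duplicationCoeff_two_mul_add (K := K) 0 m

lemma duplicationCoeff_succ_succ (m k : ℕ) :
    duplicationCoeff K (m + 1) (k + 1) =
      2 * duplicationCoeff K m (k + 1) - (m - 2 * k) * duplicationCoeff K m k := by
  rcases lt_or_ge m (2 * k) with h | h
  · simp [duplicationCoeff_of_lt, h, show m + 1 < 2 * (k + 1) by omega,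
      show m < 2 * (k + 1) by omega]
  obtain ⟨r, rfl⟩ := Nat.exists_eq_add_of_le h
  have hk : (k ! : K) ≠ 0 := cast_ne_zero.2 (factorial_ne_zero k)
  have hr : (r ! : K) ≠ 0 := cast_ne_zero.2 (factorial_ne_zero r)
  rcases r with _ | _ | r
  · simp [duplicationCoeff_of_lt, show 2 * k + 0 + 1 < 2 * (k + 1) by omega]
  · rw [show 2 * k + (0 + 1) + 1 = 2 * (k + 1) + 0 by ring, duplicationCoeff_two_mul_add,
      duplicationCoeff_of_lt (by omega), duplicationCoeff_two_mul_add]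
    have : (k + 1 : K) ≠ 0 := cast_add_one_ne_zero k
    simp only [factorial_succ, show 2 * (k + 1) + 0 = 2 * k + 1 + 1 by ring]
    push_cast
    field_simp
    ring
  · rw [show 2 * k + (r + 1 + 1) + 1 = 2 * (k + 1) + (r + 1) by ring,
      show 2 * k + (r + 1 + 1) = 2 * (k + 1) + r by ring, duplicationCoeff_two_mul_add,
      duplicationCoeff_two_mul_add, show 2 * (k + 1) + r = 2 * k + (r + 1 + 1) by ring,
      duplicationCoeff_two_mul_add]
    have : (k + 1 : K) ≠ 0 := cast_add_one_ne_zero k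
    have : (r + 1 : K) ≠ 0 := cast_add_one_ne_zero r
    have : (r + 1 + 1 : K) ≠ 0 := by norm_cast
    simp only [factorial_succ, show 2 * (k + 1) + (r + 1) = 2 * k + (r + 1 + 1) + 1 by ring]
    push_cast
    field_simp
    ring

lemma prod_two_mul_add_eq_sum_duplicationCoeff (m : ℕ) (w : K) :
    ∏ i ∈ range m, (2 * w + i) =
      ∑ k ∈ range (m + 1), duplicationCoeff K m k * ∏ i ∈ range (m - k), (w + i) := by
  induction m with
  | zero => simp [duplicationCoeff]
  | succ m ih =>
    set P : ℕ → K := fun j ↦ ∏ i ∈ range j, (w + i)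
    have step : ∀ k ≤ m,
        P (m - k) * (2 * w + m) = 2 * P (m + 1 - k) - (m - 2 * k) * P (m - k) := by
      intro k hk
      simp only [P, show m + 1 - k = m - k + 1 by omega, prod_range_succ, cast_sub hk]
      ring
    calc ∏ i ∈ range (m + 1), (2 * w + i)
        = ∑ k ∈ range (m + 1), duplicationCoeff K m k * P (m - k) * (2 * w + m) := by
          rw [prod_range_succ, ih, sum_mul]
      _ = ∑ k ∈ range (m + 1), (2 * duplicationCoeff K m k * P (m + 1 - k) -
            (m - 2 * k) * duplicationCoeff K m k * P (m - k)) := by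
          refine sum_congr rfl fun k hk ↦ ?_
          rw [mul_assoc, step k (by simpa [Nat.lt_succ_iff] using hk)]
          ring
      _ = ∑ k ∈ range (m + 2), 2 * duplicationCoeff K m k * P (m + 1 - k) -
            ∑ k ∈ range (m + 1), (m - 2 * k) * duplicationCoeff K m k * P (m - k) := by
          rw [sum_sub_distrib, sum_range_succ _ (m + 1), duplicationCoeff_of_lt (by omega)]
          simp
      _ = ∑ k ∈ range (m + 2), duplicationCoeff K (m + 1) k * P (m + 1 - k) := by
          rw [sum_range_succ' _ (m + 1),
            sum_range_succ' (fun k ↦ duplicationCoeff K (m + 1) k * _)]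
          simp only [duplicationCoeff_succ_succ, duplicationCoeff_zero_right, sub_mul,
            sum_sub_distrib, Nat.add_sub_add_right]
          ring

lemma prod_Ico_add_div_two (z : K) (j m : ℕ) :
    ∏ i ∈ Ico (2 * j) (j + m + j), (z + i / 2) =
      (∏ i ∈ range m, (2 * (z + j) + i)) / 2 ^ m := by
  have two_pow : (2 : K) ^ m = ∏ _i ∈ range m, 2 := by simp
  rw [prod_Ico_eq_prod_range, show j + m + j - 2 * j = m by omega, two_pow, ← prod_div_distrib]
  refine prod_congr rfl fun i _ ↦ ?_
  push_cast
  ring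

end

lemma gegenbauerFun_eq_sum_pow_add_one (n : ℕ) (x z : ℝ) :
    gegenbauerFun n x z = ∑ j ∈ range (n + 1), (-1) ^ (n - j) * 2 ^ j *
      (∏ i ∈ range j, (z + i)) / j ! * gegenbauerFun (n - j) 1 (z + j) * (x + 1) ^ j := by
  have h2x : 2 * x = 2 * (x + 1) + (-2) := by ring
  rw [gegenbauerFun]
  conv_lhs => arg 2; ext k; rw [h2x, add_pow, mul_sum]
  rw [sum_comm' (t' := range (n + 1)) (s' := fun j ↦ range ((n - j) / 2 + 1))
    (fun k j ↦ by simp only [mem_range]; omega)]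
  refine sum_congr rfl fun j hj ↦ ?_
  rw [gegenbauerFun, mul_sum, sum_mul]
  refine sum_congr rfl fun k hk ↦ ?_
  obtain ⟨r, rfl⟩ : ∃ r, n = j + 2 * k + r :=
    ⟨n - j - 2 * k, by simp only [mem_range] at hj hk; omega⟩
  simp only [show j + 2 * k + r - k = j + (k + r) by omega,
    show j + 2 * k + r - 2 * k = j + r by omega, show j + 2 * k + r - j = 2 * k + r by omega,
    show 2 * k + r - k = k + r by omega, add_tsub_cancel_left]
  rw [prod_range_add _ j (k + r), cast_choose ℝ (le_add_right j r), neg_pow (2 : ℝ), pow_add,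
    pow_mul, neg_one_sq, one_pow, one_mul, add_tsub_cancel_left, mul_pow 2 (x + 1)]
  push_cast [← add_assoc]
  field_simp

lemma gegenbauerFun_one (m : ℕ) (w : ℝ) :
    gegenbauerFun m 1 w = (∏ i ∈ range m, (2 * w + i)) / m ! := by
  rw [prod_two_mul_add_eq_sum_duplicationCoeff, sum_div, gegenbauerFun]
  refine sum_subset_zero_on_sdiff (range_subset_range.2 (by omega)) ?_ ?_
  · intro k hk
    rw [mem_sdiff, mem_range, mem_range] at hk
    rw [duplicationCoeff_of_lt (by omega), zero_mul, zero_div]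
  · intro k hk
    obtain ⟨r, rfl⟩ : ∃ r, m = 2 * k + r := ⟨m - 2 * k, by rw [mem_range] at hk; omega⟩
    rw [duplicationCoeff_two_mul_add, add_tsub_cancel_left, mul_one]
    field_simp

/-- Expansion of the Gegenbauer polynomial around `x = -1`:
`G_n(x,z) = Σ_{k=0}^n (2^n C(n,k)/n!) (-1)^{n+k} (Π_{i=2k}^{n+k-1}(z+i/2)) (Π_{i=0}^{k-1}(z+i)) (x+1)^k`,
as an identity of bivariate polynomials (i.e. for all real `x, z`). -/
theorem gegenbauer_expansion_at_neg_one (n : ℕ) :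
    ∀ x z : ℝ,
      gegenbauerFun n x z =
        ∑ k ∈ Finset.range (n + 1),
          (2 : ℝ) ^ n * (n.choose k : ℝ) / (n.factorial : ℝ) * (-1 : ℝ) ^ (n + k) *
            (∏ i ∈ Finset.Ico (2 * k) (n + k), (z + (i : ℝ) / 2)) *
            (∏ i ∈ Finset.range k, (z + (i : ℝ))) * (x + 1) ^ k := by
  intro x z
  rw [gegenbauerFun_eq_sum_pow_add_one]
  refine sum_congr rfl fun j hj ↦ ?_
  obtain ⟨m, rfl⟩ : ∃ m, n = j + m := ⟨n - j, by simp only [mem_range] at hj; omega⟩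
  rw [add_tsub_cancel_left, gegenbauerFun_one, prod_Ico_add_div_two,
    cast_choose ℝ (le_add_right j m), add_tsub_cancel_left, show j + m + j = m + 2 * j by ring,
    pow_add (-1 : ℝ) m, pow_mul, neg_one_sq, one_pow, mul_one]
  field_simp
  ring
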